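/- arXiv:2012.12349 — 2 statements merged into one kernel-verified Lean document; each statement's English description precedes it below -/
import Mathlib

section
/- Let X be a metric space, μ a measure over X, A ⊆ X nonempty, and ζ: 𝒮 → [0,+∞] a gauge. Assume that (1) μ is a regular measure, (2) every element of 𝒮_{μ,ζ} is closed and μ-measurable, and (3) 𝒮_{μ,ζ} covers A finely. If μ({x ∈ A : F^ζ(μ,x) = +∞}) = 0, then μ⌊A is absolutely continuous with respect to ψ_ζ⌊A (no countable covering of A by open sets of finite μ-measure is required for this implication). -/
open MeasureTheory Set ENNReal Filter

noncomputable section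

/-- The subclass `𝒮_{μ,ζ}` of a class of sets `𝒮`, obtained by removing the sets `S`
where `ζ S = μ S = 0` or `ζ S = μ S = +∞`. -/
def goodClass {X : Type*} [MetricSpace X] (μ : OuterMeasure X) (𝒮 : Set (Set X))
    (ζ : Set X → ℝ≥0∞) : Set (Set X) :=
  {S ∈ 𝒮 | ¬ ((ζ S = 0 ∧ μ S = 0) ∨ (ζ S = ⊤ ∧ μ S = ⊤))}

/-- The quotient function `Q_{μ,ζ}`: equals `+∞` if `ζ S = 0`, `μ S / ζ S` if
`0 < ζ S < +∞`, and `0` if `ζ S = +∞` (note `a / ⊤ = 0` in `ℝ≥0∞`). -/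
def fedQuot {X : Type*} [MetricSpace X] (μ : OuterMeasure X) (ζ : Set X → ℝ≥0∞)
    (S : Set X) : ℝ≥0∞ :=
  if ζ S = 0 then ⊤ else μ S / ζ S

/-- A family of sets `ℱ` covers `A` finely: for every `a ∈ A` and every `ε > 0` there is
`S ∈ ℱ` containing `a` with `diam S < ε`. -/
def CoversFinely {X : Type*} [MetricSpace X] (ℱ : Set (Set X)) (A : Set X) : Prop :=
  ∀ a ∈ A, ∀ ε : ℝ≥0∞, 0 < ε → ∃ S ∈ ℱ, a ∈ S ∧ EMetric.diam S < ε

/-- The Federer density `F^ζ(μ,x)`. -/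
def federerDensity {X : Type*} [MetricSpace X] (μ : OuterMeasure X) (𝒮 : Set (Set X))
    (ζ : Set X → ℝ≥0∞) (x : X) : ℝ≥0∞ :=
  ⨅ (ε : ℝ≥0∞) (_ : 0 < ε),
    ⨆ (S : Set X) (_ : S ∈ goodClass μ 𝒮 ζ) (_ : x ∈ S) (_ : EMetric.diam S < ε),
      fedQuot μ ζ S

/-- The size-`δ` premeasure `φ_{ζ,δ}` of the Carathéodory construction. -/
def preCarMeasure {X : Type*} [MetricSpace X] (𝒮 : Set (Set X)) (ζ : Set X → ℝ≥0∞)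
    (δ : ℝ≥0∞) (R : Set X) : ℝ≥0∞ :=
  ⨅ (E : ℕ → Set X) (_ : ∀ j, E j ∈ 𝒮) (_ : ∀ j, EMetric.diam (E j) ≤ δ)
    (_ : R ⊆ ⋃ j, E j), ∑' j, ζ (E j)

/-- The Carathéodory measure `ψ_ζ`. -/
def carMeasure {X : Type*} [MetricSpace X] (𝒮 : Set (Set X)) (ζ : Set X → ℝ≥0∞)
    (R : Set X) : ℝ≥0∞ :=
  ⨆ (δ : ℝ≥0∞) (_ : 0 < δ), preCarMeasure 𝒮 ζ δ R

/-- The `τ`-enlargement `Ŝ` of a set `S`. -/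
def enlargement {X : Type*} [MetricSpace X] (μ : OuterMeasure X) (𝒮 : Set (Set X))
    (ζ : Set X → ℝ≥0∞) (τ : ℝ) (S : Set X) : Set X :=
  ⋃₀ {T ∈ goodClass μ 𝒮 ζ | (T ∩ S).Nonempty ∧
      EMetric.diam T ≤ ENNReal.ofReal τ * EMetric.diam S}

/-- `μ` is a regular (outer) measure: every set is contained in a `μ`-measurable set of
the same measure. -/
def IsRegularOM {X : Type*} [MetricSpace X] (μ : OuterMeasure X) : Prop :=
  ∀ E : Set X, ∃ F : Set X, E ⊆ F ∧ μ.IsCaratheodory F ∧ μ F = μ E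

/-- `μ` is a Borel (outer) measure: every Borel set is `μ`-measurable. -/
def IsBorelOM {X : Type*} [MetricSpace X] (μ : OuterMeasure X) : Prop :=
  ∀ E : Set X, MeasurableSet[borel X] E → μ.IsCaratheodory E

/-- `μ` is a Borel regular (outer) measure. -/
def IsBorelRegularOM {X : Type*} [MetricSpace X] (μ : OuterMeasure X) : Prop :=
  IsBorelOM μ ∧ ∀ E : Set X, ∃ B : Set X, E ⊆ B ∧ MeasurableSet[borel X] B ∧ μ B = μ E

/-- Carathéodory measurability of a set with respect to a set function. -/
def SetFnCaratheodory {X : Type*} (ν : Set X → ℝ≥0∞) (E : Set X) : Prop :=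
  ∀ T : Set X, ν T = ν (T ∩ E) + ν (T \ E)

/-- `μ⌊A << ν⌊A`: absolute continuity of the restrictions to `A`. -/
def AbsContOn {X : Type*} [MetricSpace X] (μ : OuterMeasure X) (ν : Set X → ℝ≥0∞)
    (A : Set X) : Prop :=
  ∀ E : Set X, ν (A ∩ E) = 0 → μ (A ∩ E) = 0

/-- `S` is σ-finite with respect to the set function `ν`. -/
def SigmaFiniteWrt {X : Type*} (ν : Set X → ℝ≥0∞) (S : Set X) : Prop :=
  ∃ E : ℕ → Set X, S ⊆ ⋃ j, E j ∧ ∀ j, ν (E j) < ⊤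

/-- The integral `∫_B f dν` with respect to an (outer) set function `ν`,
via the layer-cake formula. -/
def omIntegral {X : Type*} (ν : Set X → ℝ≥0∞) (B : Set X) (f : X → ℝ≥0∞) : ℝ≥0∞ :=
  ∫⁻ t in Set.Ioi (0 : ℝ), ν {x ∈ B | ENNReal.ofReal t < f x}

/-- The enlargement condition: there are `c ≥ 1` and `η > 0` such that every
`S ∈ 𝒮_{μ,ζ}` admits `S̃ ∈ 𝒮` with `Ŝ ⊆ S̃`, `diam S̃ ≤ c diam S` and `ζ S̃ ≤ η ζ S`. -/
def EnlCondition {X : Type*} [MetricSpace X] (μ : OuterMeasure X) (𝒮 : Set (Set X))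
    (ζ : Set X → ℝ≥0∞) (τ : ℝ) : Prop :=
  ∃ c : ℝ, 1 ≤ c ∧ ∃ η : ℝ, 0 < η ∧ ∀ S ∈ goodClass μ 𝒮 ζ, ∃ S' ∈ 𝒮,
    enlargement μ 𝒮 ζ τ S ⊆ S' ∧ EMetric.diam S' ≤ ENNReal.ofReal c * EMetric.diam S ∧
      ζ S' ≤ ENNReal.ofReal η * ζ S

/-- The gauge `ζ_α(S) = c_α (diam S)^α`. -/
def zetaDiam {X : Type*} [MetricSpace X] (cα α : ℝ) (S : Set X) : ℝ≥0∞ :=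
  ENNReal.ofReal cα * EMetric.diam S ^ α

/-- The family `ℱ` of closed subsets of `X`. -/
def closedSets (X : Type*) [MetricSpace X] : Set (Set X) := {S | IsClosed S}

/-- The family `ℱ_b` of closed balls of `X` (with positive radius). -/
def closedBalls (X : Type*) [MetricSpace X] : Set (Set X) :=
  {S | ∃ (y : X) (r : ℝ), 0 < r ∧ S = Metric.closedBall y r}

/-- The family `ℱ_o` of open balls of `X` (with positive radius). -/
def openBalls (X : Type*) [MetricSpace X] : Set (Set X) :=
  {S | ∃ (y : X) (r : ℝ), 0 < r ∧ S = Metric.ball y r}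

/-- The `α`-dimensional Hausdorff measure `ℋ^α` with normalizing constant `c_α`. -/
def hausdorffMeasureC (X : Type*) [MetricSpace X] (cα α : ℝ) : Set X → ℝ≥0∞ :=
  carMeasure (closedSets X) (zetaDiam cα α)

/-- The `α`-dimensional spherical Hausdorff measure `𝒮^α` with constant `c_α`. -/
def sphericalMeasureC (X : Type*) [MetricSpace X] (cα α : ℝ) : Set X → ℝ≥0∞ :=
  carMeasure (closedBalls X) (zetaDiam cα α)

/-- `X` is diametrically regular. -/
def DiametricallyRegular (X : Type*) [MetricSpace X] : Prop :=
  ∀ x : X, ∃ R > (0 : ℝ), ∃ δ > (0 : ℝ), ∀ y ∈ Metric.ball x R,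
    ContinuousOn (fun r : ℝ => EMetric.diam (Metric.ball y r)) (Set.Ioo 0 δ)

end


/-!
Let `B = A ∩ E` with `ψ_ζ(B) = 0`. Off the `μ`-null set where the Federer density is infinite,
`B` is a countable union of sets `B ∩ D(r, t)`, `D(r, t) = fedQuotBoundedSet μ 𝒮 ζ r t`, on
which every `S ∈ 𝒮_{μ,ζ}` of diameter `< r` through a point has `μ S ≤ t ζ S`; for `t ≠ 0` this
holds trivially for the sets of `𝒮 \ 𝒮_{μ,ζ}` as well. Covering `B ∩ D(r, t)` by sets of `𝒮` of
diameter `< r` then gives `μ(B ∩ D(r, t)) ≤ t φ_{ζ,δ}(B) ≤ t ψ_ζ(B) = 0`.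
-/

section FedererDensity

variable {X : Type*} [MetricSpace X] (μ : OuterMeasure X) (𝒮 : Set (Set X))
  (ζ : Set X → ℝ≥0∞)

def fedQuotBoundedSet (r t : ℝ≥0∞) : Set X :=
  {x | ∀ S ∈ goodClass μ 𝒮 ζ, x ∈ S → EMetric.diam S < r → fedQuot μ ζ S ≤ t}

variable {μ 𝒮 ζ}

theorem preCarMeasure_le_carMeasure {δ : ℝ≥0∞} (hδ : 0 < δ) (R : Set X) :
    preCarMeasure 𝒮 ζ δ R ≤ carMeasure 𝒮 ζ R :=
  le_iSup₂ (f := fun δ (_ : 0 < δ) => preCarMeasure 𝒮 ζ δ R) δ hδ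

theorem le_mul_of_fedQuot_le {S : Set X} {t : ℝ≥0∞} (ht0 : t ≠ 0) (htop : t ≠ ⊤)
    (hS : fedQuot μ ζ S ≤ t) : μ S ≤ t * ζ S := by
  unfold fedQuot at hS
  split_ifs at hS with hζ0
  · exact absurd (top_le_iff.mp hS) htop
  · by_cases hζtop : ζ S = ⊤
    · simp [hζtop, ht0]
    · exact (ENNReal.div_le_iff hζ0 hζtop).mp hS

theorem le_mul_of_notMem_goodClass {S : Set X} {t : ℝ≥0∞} (ht0 : t ≠ 0) (hS𝒮 : S ∈ 𝒮)
    (hS : S ∉ goodClass μ 𝒮 ζ) : μ S ≤ t * ζ S := by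
  have hdeg : (ζ S = 0 ∧ μ S = 0) ∨ (ζ S = ⊤ ∧ μ S = ⊤) := not_not.mp fun h => hS ⟨hS𝒮, h⟩
  rcases hdeg with ⟨-, hμ⟩ | ⟨hζ, -⟩
  · simp [hμ]
  · simp [hζ, ht0]

theorem measure_inter_fedQuotBoundedSet_le {R : Set X} {r t δ : ℝ≥0∞} (hδr : δ < r)
    (ht0 : t ≠ 0) (htop : t ≠ ⊤) :
    μ (R ∩ fedQuotBoundedSet μ 𝒮 ζ r t) ≤ t * preCarMeasure 𝒮 ζ δ R := by
  set D := R ∩ fedQuotBoundedSet μ 𝒮 ζ r t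
  simp only [preCarMeasure, ENNReal.mul_iInf_of_ne ht0 htop]
  refine le_iInf₂ fun F hF𝒮 => le_iInf₂ fun hFdiam hFcov => ?_
  have hpiece : ∀ j, μ (F j ∩ D) ≤ t * ζ (F j) := by
    intro j
    rcases (F j ∩ D).eq_empty_or_nonempty with hempty | ⟨x, hxF, -, hxD⟩
    · simp [hempty]
    refine (μ.mono inter_subset_left).trans ?_
    by_cases hgood : F j ∈ goodClass μ 𝒮 ζ
    · exact le_mul_of_fedQuot_le ht0 htop (hxD _ hgood hxF ((hFdiam j).trans_lt hδr))
    · exact le_mul_of_notMem_goodClass ht0 (hF𝒮 j) hgood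
  have hcov : D ⊆ ⋃ j, F j ∩ D := fun x hx =>
    (mem_iUnion.mp (hFcov hx.1)).elim fun j hj => mem_iUnion.mpr ⟨j, hj, hx⟩
  calc μ D ≤ μ (⋃ j, F j ∩ D) := μ.mono hcov
    _ ≤ ∑' j, μ (F j ∩ D) := measure_iUnion_le _
    _ ≤ ∑' j, t * ζ (F j) := ENNReal.tsum_le_tsum hpiece
    _ = t * ∑' j, ζ (F j) := ENNReal.tsum_mul_left

theorem measure_inter_fedQuotBoundedSet_eq_zero {R : Set X} (hR : carMeasure 𝒮 ζ R = 0)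
    {r t : ℝ≥0∞} (hr : 0 < r) (ht0 : t ≠ 0) (htop : t ≠ ⊤) :
    μ (R ∩ fedQuotBoundedSet μ 𝒮 ζ r t) = 0 := by
  obtain ⟨δ, hδ, hδr⟩ := exists_between hr
  have hpre : preCarMeasure 𝒮 ζ δ R = 0 :=
    nonpos_iff_eq_zero.mp (hR ▸ preCarMeasure_le_carMeasure hδ R)
  simpa [hpre] using measure_inter_fedQuotBoundedSet_le (μ := μ) (𝒮 := 𝒮) (ζ := ζ) (R := R)
    hδr ht0 htop

theorem setOf_federerDensity_ne_top_subset :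
    {x | federerDensity μ 𝒮 ζ x ≠ ⊤} ⊆
      ⋃ (n : ℕ) (m : ℕ), fedQuotBoundedSet μ 𝒮 ζ (n : ℝ≥0∞)⁻¹ (m + 1) := by
  intro x hx
  have hlt := lt_top_iff_ne_top.mpr hx
  simp only [federerDensity, iInf_lt_iff] at hlt
  obtain ⟨ε, hε, hsup⟩ := hlt
  obtain ⟨m, hm⟩ := ENNReal.exists_nat_gt hsup.ne
  obtain ⟨n, hn⟩ := ENNReal.exists_inv_nat_lt hε.ne'
  refine mem_iUnion₂.mpr ⟨n, m, fun S hS hxS hdiam => ?_⟩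
  calc fedQuot μ ζ S
      ≤ ⨆ (S) (_ : S ∈ goodClass μ 𝒮 ζ) (_ : x ∈ S) (_ : EMetric.diam S < ε), fedQuot μ ζ S :=
        le_iSup₂_of_le S hS (le_iSup₂_of_le hxS (hdiam.trans hn) le_rfl)
    _ ≤ m + 1 := hm.le.trans le_self_add

theorem measure_inter_federerDensity_ne_top_eq_zero {R : Set X}
    (hR : carMeasure 𝒮 ζ R = 0) : μ (R ∩ {x | federerDensity μ 𝒮 ζ x ≠ ⊤}) = 0 := by
  refine measure_mono_null (inter_subset_inter_right R setOf_federerDensity_ne_top_subset) ?_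
  simp only [inter_iUnion]
  exact measure_iUnion_null fun n => measure_iUnion_null fun m =>
    measure_inter_fedQuotBoundedSet_eq_zero hR (ENNReal.inv_pos.mpr (natCast_ne_top n))
      (by simp) (by simp)

end FedererDensity

theorem stmt3_general {X : Type*} [MetricSpace X] (μ : MeasureTheory.OuterMeasure X)
    (𝒮 : Set (Set X)) (ζ : Set X → ℝ≥0∞) (A : Set X)
    (h : μ {x ∈ A | federerDensity μ 𝒮 ζ x = ⊤} = 0) :
    AbsContOn μ (carMeasure 𝒮 ζ) A := by
  intro E hE
  have hsplit : A ∩ E ⊆ {x ∈ A | federerDensity μ 𝒮 ζ x = ⊤} ∪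
      (A ∩ E ∩ {x | federerDensity μ 𝒮 ζ x ≠ ⊤}) := fun x hx => by
    by_cases hx' : federerDensity μ 𝒮 ζ x = ⊤
    · exact Or.inl ⟨hx.1, hx'⟩
    · exact Or.inr ⟨hx, hx'⟩
  exact measure_mono_null hsplit
    (measure_union_null h (measure_inter_federerDensity_ne_top_eq_zero hE))

/-- the absolute continuity follows from the vanishing condition, with no
countable covering by open sets of finite measure. -/
theorem stmt3 {X : Type*} [MetricSpace X] (μ : MeasureTheory.OuterMeasure X)
    (𝒮 : Set (Set X)) (ζ : Set X → ℝ≥0∞) (A : Set X) (hA : A.Nonempty)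
    (h1 : IsRegularOM μ)
    (h2 : ∀ S ∈ goodClass μ 𝒮 ζ, IsClosed S ∧ μ.IsCaratheodory S)
    (h3 : CoversFinely (goodClass μ 𝒮 ζ) A)
    (h : μ {x ∈ A | federerDensity μ 𝒮 ζ x = ⊤} = 0) :
    AbsContOn μ (carMeasure 𝒮 ζ) A :=
  stmt3_general μ 𝒮 ζ A h
end

section
/- Let X be a diametrically regular metric space, μ a measure over X, α > 0, c_α > 0, and A ⊆ X a set such that (ℱ_b)_{μ,ζ_{b,α}} covers A finely. Then for every x ∈ A the spherical Federer density equals the Federer density computed with open balls: 𝔰^α(μ,x) = F^{ζ_{o,α}}(μ,x), where ζ_{o,α} is the gauge B ↦ c_α·diam(B)^α on the family ℱ_o of open balls of X. -/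
open MeasureTheory Set ENNReal Filter

/-!
On a diametrically regular space, `r ↦ diam B(y,r)` is right-continuous at every small radius,
so a closed ball `B̄(y,ρ)` has the same diameter, hence the same gauge, as the open ball
`B(y,ρ)` and as the limit of the open balls `B(y,s)`, `s ↓ ρ`. The open ball `B(y,ρ)` therefore
has quotient at most that of `B̄(y,ρ)`, while the slightly larger balls `B(y,s)` have measure at
least `μ B̄(y,ρ)` and gauge arbitrarily close to its gauge. Hence for small `ε` the two suprema
defining the densities at `x` agree.
-/

open Metric Topology

section FedererQuotient

variable {X : Type*} [MetricSpace X] {μ : OuterMeasure X} {ζ : Set X → ℝ≥0∞} {S T : Set X}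

noncomputable def federerSup (μ : OuterMeasure X) (𝒮 : Set (Set X)) (ζ : Set X → ℝ≥0∞) (x : X)
    (ε : ℝ≥0∞) : ℝ≥0∞ :=
  ⨆ (S : Set X) (_ : S ∈ goodClass μ 𝒮 ζ) (_ : x ∈ S) (_ : ediam S < ε), fedQuot μ ζ S

lemma federerSup_mono {𝒮 : Set (Set X)} {x : X} : Monotone (federerSup μ 𝒮 ζ x) :=
  fun _ _ hεε' => iSup₂_mono fun _ _ => iSup₂_mono' fun hx hSε => ⟨hx, hSε.trans_le hεε', le_rfl⟩

lemma le_federerSup {𝒮 : Set (Set X)} {x : X} {ε : ℝ≥0∞} (hS : S ∈ goodClass μ 𝒮 ζ)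
    (hx : x ∈ S) (hε : ediam S < ε) : fedQuot μ ζ S ≤ federerSup μ 𝒮 ζ x ε :=
  le_iSup₂_of_le S hS <| le_iSup₂_of_le (f := fun _ _ => fedQuot μ ζ S) hx hε le_rfl

lemma federerDensity_le_of_forall {𝒮 𝒯 : Set (Set X)} {x : X} {ε₀ : ℝ≥0∞} (hε₀ : 0 < ε₀)
    (h : ∀ ε ≤ ε₀, ∀ S ∈ goodClass μ 𝒮 ζ, x ∈ S → ediam S < ε →
      fedQuot μ ζ S ≤ federerSup μ 𝒯 ζ x ε) :
    federerDensity μ 𝒮 ζ x ≤ federerDensity μ 𝒯 ζ x := by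
  refine le_iInf₂ fun ε hε => ?_
  calc federerDensity μ 𝒮 ζ x ≤ federerSup μ 𝒮 ζ x (min ε ε₀) := iInf₂_le _ (lt_min hε hε₀)
    _ ≤ federerSup μ 𝒯 ζ x (min ε ε₀) :=
      iSup₂_le fun S hS => iSup₂_le fun hx hSε => h _ (min_le_right _ _) S hS hx hSε
    _ ≤ federerSup μ 𝒯 ζ x ε := federerSup_mono (min_le_left _ _)

lemma fedQuot_mono (hμ : μ S ≤ μ T) (hζ : ζ T ≤ ζ S) : fedQuot μ ζ S ≤ fedQuot μ ζ T := by
  unfold fedQuot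
  split_ifs with hS hT hT
  · exact le_rfl
  · exact absurd (nonpos_iff_eq_zero.1 (hζ.trans_eq hS)) hT
  · exact le_top
  · exact ENNReal.div_le_div hμ hζ

lemma mul_lt_of_lt_fedQuot {lam : ℝ≥0∞} (hS : ¬ (ζ S = 0 ∧ μ S = 0)) (hζ : ζ S ≠ ⊤)
    (h : lam < fedQuot μ ζ S) : lam * ζ S < μ S := by
  by_cases hζ0 : ζ S = 0
  · simpa [hζ0, pos_iff_ne_zero] using hS
  · rw [fedQuot, if_neg hζ0] at h
    exact (ENNReal.lt_div_iff_mul_lt (.inl hζ0) (.inl hζ)).1 h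

lemma lt_fedQuot_of_mul_lt {lam : ℝ≥0∞} (hlam : lam ≠ ⊤) (hζ : ζ T ≠ ⊤)
    (h : lam * ζ T < μ T) : lam < fedQuot μ ζ T := by
  unfold fedQuot
  split_ifs with hζ0
  · exact hlam.lt_top
  · exact (ENNReal.lt_div_iff_mul_lt (.inl hζ0) (.inl hζ)).2 h

lemma mem_goodClass_of_le {𝒮 𝒯 : Set (Set X)} (hS : S ∈ goodClass μ 𝒮 ζ) (hT : T ∈ 𝒯)
    (hμ : μ S ≤ μ T) (hζ : ζ S ≤ ζ T) (hζT : ζ T ≠ ⊤) : T ∈ goodClass μ 𝒯 ζ := by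
  refine ⟨hT, ?_⟩
  rintro (⟨hζ0, hμ0⟩ | ⟨hζtop, -⟩)
  · exact hS.2 (.inl ⟨nonpos_iff_eq_zero.1 (hζ.trans_eq hζ0),
      nonpos_iff_eq_zero.1 (hμ.trans_eq hμ0)⟩)
  · exact hζT hζtop

end FedererQuotient

section Gauge

variable {X : Type*} [MetricSpace X] {α cα : ℝ} {S T : Set X}

lemma continuous_ofReal_mul_rpow_const :
    Continuous fun t : ℝ≥0∞ => ENNReal.ofReal cα * t ^ α :=
  (ENNReal.continuous_const_mul ENNReal.ofReal_ne_top).comp ENNReal.continuous_rpow_const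

lemma zetaDiam_mono (hα : 0 ≤ α) (h : ediam S ≤ ediam T) : zetaDiam cα α S ≤ zetaDiam cα α T :=
  mul_le_mul_right (ENNReal.rpow_le_rpow h hα) _

lemma zetaDiam_ne_top (hα : 0 ≤ α) (hS : Bornology.IsBounded S) : zetaDiam cα α S ≠ ⊤ :=
  ENNReal.mul_ne_top ENNReal.ofReal_ne_top (ENNReal.rpow_ne_top_of_nonneg hα hS.ediam_ne_top)

end Gauge

section Balls

variable {X : Type*} [PseudoMetricSpace X] {y : X} {r ρ u : ℝ}

lemma ediam_closedBall_eq_ediam_ball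
    (hcont : ContinuousWithinAt (fun r => ediam (ball y r)) (Ioi ρ) ρ) :
    ediam (closedBall y ρ) = ediam (ball y ρ) :=
  le_antisymm (ge_of_tendsto hcont <| eventually_nhdsWithin_of_forall fun _ hs =>
    ediam_mono (closedBall_subset_ball hs)) (ediam_mono ball_subset_closedBall)

lemma exists_closedBall_eq_of_ediam_lt (hr : 0 < r) (h : ediam (closedBall y r) < .ofReal u) :
    ∃ ρ ∈ Ioo 0 u, closedBall y r = closedBall y ρ := by
  set d := (ediam (closedBall y r)).toReal
  have hd0 : 0 ≤ d := ENNReal.toReal_nonneg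
  have hd : d < u := ENNReal.toReal_lt_of_lt_ofReal h
  have hdist : ∀ z ∈ closedBall y r, dist z y ≤ d := fun z hz => by
    rw [dist_edist]
    exact ENNReal.toReal_mono h.ne_top (edist_le_ediam_of_mem hz (mem_closedBall_self hr.le))
  refine ⟨min r ((d + u) / 2), ⟨lt_min hr (by linarith), (min_le_right _ _).trans_lt (by linarith)⟩,
    ?_⟩
  refine (closedBall_subset_closedBall (min_le_left _ _)).antisymm' fun z hz => ?_
  exact le_min hz ((hdist z hz).trans (by linarith))

lemma exists_ball_eq_of_ediam_lt (hr : 0 < r) (h : ediam (ball y r) < .ofReal u) :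
    ∃ ρ ∈ Ioo 0 u, ball y r = ball y ρ := by
  set d := (ediam (ball y r)).toReal
  have hd0 : 0 ≤ d := ENNReal.toReal_nonneg
  have hd : d < u := ENNReal.toReal_lt_of_lt_ofReal h
  have hdist : ∀ z ∈ ball y r, dist z y ≤ d := fun z hz => by
    rw [dist_edist]
    exact ENNReal.toReal_mono h.ne_top (edist_le_ediam_of_mem hz (mem_ball_self hr))
  refine ⟨min r ((d + u) / 2), ⟨lt_min hr (by linarith), (min_le_right _ _).trans_lt (by linarith)⟩,
    ?_⟩
  refine (ball_subset_ball (min_le_left _ _)).antisymm' fun z hz => ?_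
  exact lt_min hz ((hdist z hz).trans_lt (by linarith))

end Balls

section BallFamilies

variable {X : Type*} [MetricSpace X] {μ : OuterMeasure X} {α cα : ℝ} {x y : X} {ρ u : ℝ}
  {ε : ℝ≥0∞} {S : Set X}

lemma exists_closedBall_eq_of_mem (hS : S ∈ closedBalls X) (hx : x ∈ S)
    (h : ediam S < .ofReal u) : ∃ y, dist y x < u ∧ ∃ ρ ∈ Ioo 0 u, S = closedBall y ρ := by
  obtain ⟨y, r, hr, rfl⟩ := hS
  obtain ⟨ρ, hρ, hSρ⟩ := exists_closedBall_eq_of_ediam_lt hr h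
  exact ⟨y, edist_lt_ofReal.1 ((edist_le_ediam_of_mem (mem_closedBall_self hr.le) hx).trans_lt h),
    ρ, hρ, hSρ⟩

lemma exists_ball_eq_of_mem (hS : S ∈ openBalls X) (hx : x ∈ S)
    (h : ediam S < .ofReal u) : ∃ y, dist y x < u ∧ ∃ ρ ∈ Ioo 0 u, S = ball y ρ := by
  obtain ⟨y, r, hr, rfl⟩ := hS
  obtain ⟨ρ, hρ, hSρ⟩ := exists_ball_eq_of_ediam_lt hr h
  exact ⟨y, edist_lt_ofReal.1 ((edist_le_ediam_of_mem (mem_ball_self hr) hx).trans_lt h),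
    ρ, hρ, hSρ⟩

lemma DiametricallyRegular.exists_continuousAt_ediam_ball (hX : DiametricallyRegular X) (x : X) :
    ∃ m > 0, ∀ y, dist y x < m → ∀ ρ ∈ Ioo 0 m, ContinuousAt (fun r => ediam (ball y r)) ρ := by
  obtain ⟨R, hR, δ, hδ, hcont⟩ := hX x
  refine ⟨min R δ, lt_min hR hδ, fun y hy ρ hρ => ?_⟩
  exact (hcont y (mem_ball.2 (hy.trans_le (min_le_left _ _)))).continuousAt
    (Ioo_mem_nhds hρ.1 (hρ.2.trans_le (min_le_right _ _)))

lemma zetaDiam_closedBall_eq_zetaDiam_ball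
    (hcont : ContinuousWithinAt (fun r => ediam (ball y r)) (Ioi ρ) ρ) :
    zetaDiam cα α (closedBall y ρ) = zetaDiam cα α (ball y ρ) :=
  congrArg (fun t => ENNReal.ofReal cα * t ^ α) (ediam_closedBall_eq_ediam_ball hcont)

lemma fedQuot_ball_le_federerSup_closedBalls (hα : 0 ≤ α)
    (hcont : ContinuousWithinAt (fun r => ediam (ball y r)) (Ioi ρ) ρ)
    (hT : ball y ρ ∈ goodClass μ (openBalls X) (zetaDiam cα α)) (hx : x ∈ ball y ρ)
    (hε : ediam (ball y ρ) < ε) :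
    fedQuot μ (zetaDiam cα α) (ball y ρ) ≤ federerSup μ (closedBalls X) (zetaDiam cα α) x ε := by
  have hζ := zetaDiam_closedBall_eq_zetaDiam_ball (cα := cα) (α := α) hcont
  have hμ := μ.mono (ball_subset_closedBall (x := y) (ε := ρ))
  have hC : closedBall y ρ ∈ goodClass μ (closedBalls X) (zetaDiam cα α) :=
    mem_goodClass_of_le hT ⟨y, ρ, pos_of_mem_ball hx, rfl⟩ hμ hζ.ge
      (zetaDiam_ne_top hα isBounded_closedBall)
  exact (fedQuot_mono hμ hζ.le).trans (le_federerSup hC (ball_subset_closedBall hx)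
    ((ediam_closedBall_eq_ediam_ball hcont).trans_lt hε))

lemma fedQuot_closedBall_le_federerSup_openBalls (hα : 0 ≤ α)
    (hcont : ContinuousWithinAt (fun r => ediam (ball y r)) (Ioi ρ) ρ)
    (hC : closedBall y ρ ∈ goodClass μ (closedBalls X) (zetaDiam cα α)) (hx : x ∈ closedBall y ρ)
    (hε : ediam (closedBall y ρ) < ε) :
    fedQuot μ (zetaDiam cα α) (closedBall y ρ) ≤
      federerSup μ (openBalls X) (zetaDiam cα α) x ε := by
  refine le_of_forall_lt fun lam hlam => ?_
  have hlamC : lam * zetaDiam cα α (ball y ρ) < μ (closedBall y ρ) :=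
    zetaDiam_closedBall_eq_zetaDiam_ball hcont ▸
      mul_lt_of_lt_fedQuot (not_or.1 hC.2).1 (zetaDiam_ne_top hα isBounded_closedBall) hlam
  have hgauge : ContinuousWithinAt (fun s => lam * zetaDiam cα α (ball y s)) (Ioi ρ) ρ :=
    ((ENNReal.continuous_const_mul hlam.ne_top).comp continuous_ofReal_mul_rpow_const).continuousAt
      |>.comp_continuousWithinAt hcont
  rw [ediam_closedBall_eq_ediam_ball hcont] at hε
  obtain ⟨s, hρs, hsζ, hsε⟩ := (eventually_mem_nhdsWithin.and
    ((hgauge.eventually_lt_const hlamC).and (hcont.eventually_lt_const hε))).exists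
  have hCT : closedBall y ρ ⊆ ball y s := closedBall_subset_ball hρs
  have hT : ball y s ∈ goodClass μ (openBalls X) (zetaDiam cα α) :=
    mem_goodClass_of_le hC ⟨y, s, (dist_nonneg.trans hx).trans_lt hρs, rfl⟩ (μ.mono hCT)
      (zetaDiam_mono hα (ediam_mono hCT)) (zetaDiam_ne_top hα isBounded_ball)
  exact (lt_fedQuot_of_mul_lt hlam.ne_top (zetaDiam_ne_top hα isBounded_ball)
    (hsζ.trans_le (μ.mono hCT))).trans_le (le_federerSup hT (hCT hx) hsε)

end BallFamilies

theorem stmt12_general {X : Type*} [MetricSpace X] (μ : MeasureTheory.OuterMeasure X)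
    (α cα : ℝ) (hα : 0 < α) (A : Set X)
    (hX : DiametricallyRegular X) :
    ∀ x ∈ A, federerDensity μ (closedBalls X) (zetaDiam cα α) x =
      federerDensity μ (openBalls X) (zetaDiam cα α) x := by
  intro x _
  obtain ⟨m, hm, hreg⟩ := hX.exists_continuousAt_ediam_ball x
  apply le_antisymm
  · refine federerDensity_le_of_forall (ENNReal.ofReal_pos.2 hm) fun ε hε S hS hxS hSε => ?_
    obtain ⟨y, hyx, ρ, hρ, rfl⟩ := exists_closedBall_eq_of_mem hS.1 hxS (hSε.trans_le hε)
    exact fedQuot_closedBall_le_federerSup_openBalls hα.le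
      (hreg y hyx ρ hρ).continuousWithinAt hS hxS hSε
  · refine federerDensity_le_of_forall (ENNReal.ofReal_pos.2 hm) fun ε hε T hT hxT hTε => ?_
    obtain ⟨y, hyx, ρ, hρ, rfl⟩ := exists_ball_eq_of_mem hT.1 hxT (hTε.trans_le hε)
    exact fedQuot_ball_le_federerSup_closedBalls hα.le
      (hreg y hyx ρ hρ).continuousWithinAt hT hxT hTε

/-- on a diametrically regular metric space, the spherical Federer density
coincides with the Federer density computed with open balls. -/
theorem stmt12 {X : Type*} [MetricSpace X] (μ : MeasureTheory.OuterMeasure X)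
    (α cα : ℝ) (hα : 0 < α) (hc : 0 < cα) (A : Set X)
    (hX : DiametricallyRegular X)
    (h : CoversFinely (goodClass μ (closedBalls X) (zetaDiam cα α)) A) :
    ∀ x ∈ A, federerDensity μ (closedBalls X) (zetaDiam cα α) x =
      federerDensity μ (openBalls X) (zetaDiam cα α) x :=
  stmt12_general μ α cα hα A hX
end
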